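/- Let r : [t_i,t_e] → ℝⁿ be twice continuously differentiable and let u : [t_i,t_e] → ℝᵐ, b : [t_i,t_e] → ℝⁿ be continuous, and let v_i, v_e ∈ ℝⁿ. Suppose that for every continuously differentiable δw : [t_i,t_e] → ℝⁿ one has ∫_{t_i}^{t_e} [ ⟨δẇ(t), M ṙ(t)⟩ - ⟨δw(t), k(r(t))⟩ + ⟨δw(t), b(t)⟩ + ⟨δw(t), G u(t)⟩ ] dt + ⟨δw(t_i), M v_i⟩ - ⟨δw(t_e), M v_e⟩ = 0. Then M r̈(t) = -k(r(t)) + b(t) + G u(t) for all t ∈ [t_i,t_e], and moreover the velocity boundary conditions ṙ(t_i) = v_i and ṙ(t_e) = v_e hold. -/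

import Mathlib

open Set Matrix MeasureTheory

section Helpers

variable {n p : ℕ} {s : Set ℝ} {x : ℝ}

private lemma hasDerivWithinAt_app {f : ℝ → Fin n → ℝ} {f' : Fin n → ℝ}
    (hf : HasDerivWithinAt f f' s x) (i : Fin n) :
    HasDerivWithinAt (fun t => f t i) (f' i) s x := by
  simpa [Function.comp_def] using
    ((ContinuousLinearMap.proj (R := ℝ) (φ := fun _ : Fin n => ℝ) i)).hasFDerivAt.comp_hasDerivWithinAt x hf

private lemma hasDerivWithinAt_dot {f g : ℝ → Fin n → ℝ} {f' g' : Fin n → ℝ}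
    (hf : HasDerivWithinAt f f' s x) (hg : HasDerivWithinAt g g' s x) :
    HasDerivWithinAt (fun t => f t ⬝ᵥ g t) (f' ⬝ᵥ g x + f x ⬝ᵥ g') s x := by
  have h : ∀ i ∈ Finset.univ, HasDerivWithinAt (fun t => f t i * g t i)
      (f' i * g x i + f x i * g' i) s x := fun i _ =>
    (hasDerivWithinAt_app hf i).mul (hasDerivWithinAt_app hg i)
  simpa [dotProduct, Finset.sum_add_distrib] using HasDerivWithinAt.fun_sum h

private lemma hasDerivWithinAt_mulVec (M : Matrix (Fin p) (Fin n) ℝ)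
    {f : ℝ → Fin n → ℝ} {f' : Fin n → ℝ} (hf : HasDerivWithinAt f f' s x) :
    HasDerivWithinAt (fun t => M *ᵥ f t) (M *ᵥ f') s x := by
  have := (LinearMap.toContinuousLinearMap
    (Matrix.mulVecLin M)).hasFDerivAt.comp_hasDerivWithinAt x hf
  simpa [Function.comp_def, Matrix.mulVecLin_apply] using this

private lemma continuousOn_mulVec {S : Set ℝ} (M : Matrix (Fin p) (Fin n) ℝ)
    {f : ℝ → Fin n → ℝ} (hf : ContinuousOn f S) :
    ContinuousOn (fun t => M *ᵥ f t) S := by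
  have := (LinearMap.toContinuousLinearMap
    (Matrix.mulVecLin M)).continuous.comp_continuousOn hf
  simpa [Function.comp_def, Matrix.mulVecLin_apply] using this

private lemma continuousOn_dot {S : Set ℝ} {f g : ℝ → Fin n → ℝ}
    (hf : ContinuousOn f S) (hg : ContinuousOn g S) :
    ContinuousOn (fun t => f t ⬝ᵥ g t) S := by
  simp only [dotProduct]
  exact continuousOn_finset_sum _ fun i _ =>
    (((continuous_apply i).comp_continuousOn hf)).mul
      ((continuous_apply i).comp_continuousOn hg)

private lemma integral_app {a b : ℝ} {f : ℝ → Fin n → ℝ}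
    (hf : IntervalIntegrable f volume a b) (i : Fin n) :
    (∫ t in a..b, f t) i = ∫ t in a..b, f t i := by
  simpa using
    (((ContinuousLinearMap.proj (R := ℝ) (φ := fun _ : Fin n => ℝ) i)).intervalIntegral_comp_comm hf).symm

private lemma integral_dot_const {a b : ℝ} (hab : a ≤ b) {f : ℝ → Fin n → ℝ}
    (hf : ContinuousOn f (Icc a b)) (c : Fin n → ℝ) :
    (∫ t in a..b, f t ⬝ᵥ c) = (∫ t in a..b, f t) ⬝ᵥ c := by
  have hfint : IntervalIntegrable f volume a b :=
    (hf.mono (uIcc_subset_Icc ⟨le_rfl, hab⟩ ⟨hab, le_rfl⟩)).intervalIntegrable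
  have hcomp : ∀ i : Fin n, IntervalIntegrable (fun t => f t i * c i) volume a b := by
    intro i
    apply ContinuousOn.intervalIntegrable
    exact (((continuous_apply i).comp_continuousOn
      (hf.mono (uIcc_subset_Icc ⟨le_rfl, hab⟩ ⟨hab, le_rfl⟩)))).mul continuousOn_const
  simp only [dotProduct]
  rw [intervalIntegral.integral_finset_sum fun i _ => hcomp i]
  refine Finset.sum_congr rfl fun i _ => ?_
  rw [intervalIntegral.integral_mul_const, integral_app hfint i]

end Helpers

/-- Converse: if the weak-in-time identity holds for every C¹ test function `δw`, then
the equation of motion `M r̈ = -k(r) + b + G u` holds on `[t_i, t_e]` and the velocity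
endpoint conditions `ṙ(t_i) = v_i`, `ṙ(t_e) = v_e` are enforced as natural conditions. -/
theorem semidiscrete_weak_implies_strong
    {n m : ℕ} {ti te : ℝ} (hti : ti < te)
    (M : Matrix (Fin n) (Fin n) ℝ) (hMsymm : M.IsSymm) (hMpd : M.PosDef)
    (k : (Fin n → ℝ) → (Fin n → ℝ)) (hk : Continuous k)
    (G : Matrix (Fin n) (Fin m) ℝ)
    (r r' r'' : ℝ → Fin n → ℝ)
    (hr : ∀ t ∈ Icc ti te, HasDerivWithinAt r (r' t) (Icc ti te) t)
    (hr' : ∀ t ∈ Icc ti te, HasDerivWithinAt r' (r'' t) (Icc ti te) t)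
    (hr'' : ContinuousOn r'' (Icc ti te))
    (u : ℝ → Fin m → ℝ) (hu : ContinuousOn u (Icc ti te))
    (b : ℝ → Fin n → ℝ) (hb : ContinuousOn b (Icc ti te))
    (vi ve : Fin n → ℝ)
    (hweak : ∀ δw δw' : ℝ → Fin n → ℝ,
      (∀ t ∈ Icc ti te, HasDerivWithinAt δw (δw' t) (Icc ti te) t) →
      ContinuousOn δw' (Icc ti te) →
      (∫ t in ti..te,
        (δw' t ⬝ᵥ (M *ᵥ r' t) - δw t ⬝ᵥ k (r t) + δw t ⬝ᵥ b t + δw t ⬝ᵥ (G *ᵥ u t)))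
        + δw ti ⬝ᵥ (M *ᵥ vi) - δw te ⬝ᵥ (M *ᵥ ve) = 0) :
    (∀ t ∈ Icc ti te, M *ᵥ r'' t = -(k (r t)) + b t + G *ᵥ u t)
      ∧ r' ti = vi ∧ r' te = ve := by
  -- notation
  have hsub : ∀ t₁ ∈ Icc ti te, ∀ t₂ ∈ Icc ti te, uIcc t₁ t₂ ⊆ Icc ti te :=
    fun t₁ h₁ t₂ h₂ => uIcc_subset_Icc h₁ h₂
  have hrC : ContinuousOn r (Icc ti te) := fun t ht => (hr t ht).continuousWithinAt
  have hr'C : ContinuousOn r' (Icc ti te) := fun t ht => (hr' t ht).continuousWithinAt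
  set g : ℝ → Fin n → ℝ := fun t => -(k (r t)) + b t + G *ᵥ u t with hgdef
  have hgc : ContinuousOn g (Icc ti te) :=
    (((hk.comp_continuousOn hrC).neg.add hb).add (continuousOn_mulVec G hu))
  set P : ℝ → Fin n → ℝ := fun x => ∫ s in ti..x, g s with hPdef
  have htiI : ti ∈ Icc ti te := ⟨le_rfl, hti.le⟩
  have hteI : te ∈ Icc ti te := ⟨hti.le, le_rfl⟩
  have hgint : ∀ t₁ ∈ Icc ti te, ∀ t₂ ∈ Icc ti te, IntervalIntegrable g volume t₁ t₂ :=
    fun t₁ h₁ t₂ h₂ => (hgc.mono (hsub t₁ h₁ t₂ h₂)).intervalIntegrable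
  -- derivative of the primitive of a continuous-on function
  have primDeriv : ∀ (f : ℝ → Fin n → ℝ), ContinuousOn f (Icc ti te) →
      ∀ t ∈ Icc ti te, HasDerivWithinAt (fun x => ∫ s in ti..x, f s) (f t) (Icc ti te) t := by
    intro f hf t ht
    haveI : Fact (t ∈ Icc ti te) := ⟨ht⟩
    exact intervalIntegral.integral_hasDerivWithinAt_right
      ((hf.mono (hsub ti htiI t ht)).intervalIntegrable)
      ⟨Icc ti te, self_mem_nhdsWithin, hf.aestronglyMeasurable measurableSet_Icc⟩
      (hf t ht)
  have hPd : ∀ t ∈ Icc ti te, HasDerivWithinAt P (g t) (Icc ti te) t := primDeriv g hgc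
  have hPc : ContinuousOn P (Icc ti te) := fun t ht => (hPd t ht).continuousWithinAt
  -- Step 1: constant test functions determine P te
  have hPte : P te = M *ᵥ ve - M *ᵥ vi := by
    funext j
    have hw := hweak (fun _ => Pi.single j 1) (fun _ => 0)
      (fun t _ => hasDerivWithinAt_const t _ _) continuousOn_const
    simp only [zero_dotProduct, single_dotProduct, one_mul, zero_sub] at hw
    have hPj : P te j = ∫ t in ti..te, g t j := integral_app (hgint ti htiI te hteI) j
    have hgj : ∀ t, g t j = -(k (r t) j) + b t j + (G *ᵥ u t) j := fun t => rfl
    rw [hPj]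
    simp only [Pi.sub_apply]
    rw [intervalIntegral.integral_congr (g := fun t => -(k (r t) j) + b t j + (G *ᵥ u t) j)
      (fun t _ => hgj t)]
    linarith [hw]
  -- Step 2: the key orthogonality relation
  have key : ∀ h : ℝ → Fin n → ℝ, ContinuousOn h (Icc ti te) →
      (∫ t in ti..te, h t ⬝ᵥ (M *ᵥ r' t - P t - M *ᵥ vi)) = 0 := by
    intro h hhc
    set δw : ℝ → Fin n → ℝ := fun x => ∫ s in ti..x, h s with hδdef
    have hδd : ∀ t ∈ Icc ti te, HasDerivWithinAt δw (h t) (Icc ti te) t := primDeriv h hhc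
    have hδc : ContinuousOn δw (Icc ti te) := fun t ht => (hδd t ht).continuousWithinAt
    have hδti : δw ti = 0 := intervalIntegral.integral_same
    have hw := hweak δw h hδd hhc
    -- continuity of various integrands on Icc
    have hA : ContinuousOn (fun t => h t ⬝ᵥ (M *ᵥ r' t)) (Icc ti te) :=
      continuousOn_dot hhc (continuousOn_mulVec M hr'C)
    have hB : ContinuousOn (fun t => δw t ⬝ᵥ g t) (Icc ti te) := continuousOn_dot hδc hgc
    have hC : ContinuousOn (fun t => h t ⬝ᵥ P t) (Icc ti te) := continuousOn_dot hhc hPc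
    have hInt : ∀ {F : ℝ → ℝ}, ContinuousOn F (Icc ti te) → IntervalIntegrable F volume ti te :=
      fun hF => (hF.mono (hsub ti htiI te hteI)).intervalIntegrable
    -- rewrite hweak's integrand
    have hintg : (fun t => h t ⬝ᵥ (M *ᵥ r' t) - δw t ⬝ᵥ k (r t) + δw t ⬝ᵥ b t
        + δw t ⬝ᵥ (G *ᵥ u t)) = fun t => h t ⬝ᵥ (M *ᵥ r' t) + δw t ⬝ᵥ g t := by
      funext t
      simp only [hgdef, dotProduct_add, dotProduct_neg]
      ring
    rw [hintg, hδti, zero_dotProduct] at hw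
    -- integration by parts for δw ⬝ᵥ P
    have hibp : (∫ t in ti..te, (h t ⬝ᵥ P t + δw t ⬝ᵥ g t)) = δw te ⬝ᵥ P te := by
      have hφc : ContinuousOn (fun t => δw t ⬝ᵥ P t) (Icc ti te) := continuousOn_dot hδc hPc
      have hφd : ∀ x ∈ Ioo ti te, HasDerivWithinAt (fun t => δw t ⬝ᵥ P t)
          (h x ⬝ᵥ P x + δw x ⬝ᵥ g x) (Ioi x) x := by
        intro x hx
        have hx' : x ∈ Icc ti te := Ioo_subset_Icc_self hx
        exact ((hasDerivWithinAt_dot (hδd x hx') (hPd x hx')).hasDerivAt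
          (Icc_mem_nhds hx.1 hx.2)).hasDerivWithinAt
      have := intervalIntegral.integral_eq_sub_of_hasDeriv_right_of_le hti.le hφc hφd
        (hInt (hC.add hB))
      rw [this, hδti, zero_dotProduct, sub_zero]
    have hDint : (∫ t in ti..te, h t ⬝ᵥ (M *ᵥ vi)) = δw te ⬝ᵥ (M *ᵥ vi) :=
      integral_dot_const hti.le hhc (M *ᵥ vi)
    have hsplit : (∫ t in ti..te, h t ⬝ᵥ (M *ᵥ r' t - P t - M *ᵥ vi))
        = (∫ t in ti..te, (h t ⬝ᵥ (M *ᵥ r' t) + δw t ⬝ᵥ g t))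
          - (∫ t in ti..te, (h t ⬝ᵥ P t + δw t ⬝ᵥ g t))
          - (∫ t in ti..te, h t ⬝ᵥ (M *ᵥ vi)) := by
      rw [← intervalIntegral.integral_sub (f := fun t => h t ⬝ᵥ (M *ᵥ r' t) + δw t ⬝ᵥ g t)
          (g := fun t => h t ⬝ᵥ P t + δw t ⬝ᵥ g t) (hInt (hA.add hB)) (hInt (hC.add hB)),
        ← intervalIntegral.integral_sub
          (f := fun t => (h t ⬝ᵥ (M *ᵥ r' t) + δw t ⬝ᵥ g t) - (h t ⬝ᵥ P t + δw t ⬝ᵥ g t))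
          (g := fun t => h t ⬝ᵥ (M *ᵥ vi))
          (((hInt (hA.add hB)).sub (hInt (hC.add hB))))
          (hInt (continuousOn_dot hhc continuousOn_const))]
      refine intervalIntegral.integral_congr fun t _ => ?_
      simp only [dotProduct_sub]
      ring
    rw [hsplit, hibp, hDint, hPte, dotProduct_sub]
    linarith [hw]
  -- Step 3: apply to q itself
  set q : ℝ → Fin n → ℝ := fun t => M *ᵥ r' t - P t - M *ᵥ vi with hqdef
  have hqc : ContinuousOn q (Icc ti te) :=
    ((continuousOn_mulVec M hr'C).sub hPc).sub continuousOn_const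
  have hq0 : ∀ t ∈ Icc ti te, q t = 0 := by
    intro t ht
    by_contra hne
    have hnn : ∀ x ∈ Ioc ti te, 0 ≤ q x ⬝ᵥ q x := fun x _ =>
      Finset.sum_nonneg fun i _ => mul_self_nonneg _
    have hpos : 0 < q t ⬝ᵥ q t :=
      lt_of_le_of_ne (Finset.sum_nonneg fun i _ => mul_self_nonneg _)
        (fun hz => hne (dotProduct_self_eq_zero.mp hz.symm))
    have := intervalIntegral.integral_pos hti (continuousOn_dot hqc hqc) hnn ⟨t, ht, hpos⟩
    rw [key q hqc] at this
    exact lt_irrefl 0 this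
  have hMr' : ∀ t ∈ Icc ti te, M *ᵥ r' t = P t + M *ᵥ vi := by
    intro t ht
    have := hq0 t ht
    rw [hqdef] at this
    simp only [sub_sub] at this
    exact sub_eq_zero.mp this
  -- injectivity of mulVec from positive definiteness
  have Minj : ∀ x y : Fin n → ℝ, M *ᵥ x = M *ᵥ y → x = y := by
    intro x y hxy
    by_contra hne
    have hd : x - y ≠ 0 := sub_ne_zero.mpr hne
    have hp := hMpd.dotProduct_mulVec_pos hd
    rw [Matrix.mulVec_sub, hxy, sub_self, dotProduct_zero] at hp
    exact lt_irrefl 0 hp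
  refine ⟨?_, ?_, ?_⟩
  · -- equation of motion
    intro t ht
    have h1 : HasDerivWithinAt (fun s => M *ᵥ r' s) (M *ᵥ r'' t) (Icc ti te) t :=
      hasDerivWithinAt_mulVec M (hr' t ht)
    have h2 : HasDerivWithinAt (fun s => P s + M *ᵥ vi) (g t) (Icc ti te) t :=
      (hPd t ht).add_const _
    have h3 : HasDerivWithinAt (fun s => M *ᵥ r' s) (g t) (Icc ti te) t :=
      h2.congr (fun s hs => hMr' s hs) (hMr' t ht)
    have hu1 := h1.derivWithin (uniqueDiffOn_Icc hti t ht)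
    have hu2 := h3.derivWithin (uniqueDiffOn_Icc hti t ht)
    rw [hu1] at hu2
    exact hu2
  · -- initial velocity
    apply Minj
    have := hMr' ti htiI
    have hPti : P ti = 0 := intervalIntegral.integral_same
    rw [hPti, zero_add] at this
    exact this
  · -- final velocity
    apply Minj
    have := hMr' te hteI
    rw [hPte] at this
    rw [this]
    abel
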